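/- arXiv:2006.06365 — 4 statements merged into one kernel-verified Lean document; each statement's English description precedes it below -/
import Mathlib

section
/- Let G : ℝⁿ × Ω → ℝ be a random convex function such that for a.e. ω, G(·,ω) is differentiable with ν-Lipschitz gradient (w.r.t. a norm ‖·‖ with dual ‖·‖_*), and let g(x) = E[G(x,ω)] be differentiable with E[∇G(x,ω)] = ∇g(x). Denote ζ(x,ω) = ∇G(x,ω) - ∇g(x), and let x_* ∈ ℝⁿ, ς_*² = E[‖ζ(x_*,ω)‖_*²]. Then for every x: E[‖ζ(x,ω)‖_*²] ≤ 16ν·[g(x) - g(x_*) - ⟨∇g(x_*), x - x_*⟩] + 2ς_*². -/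
/-!
Write `Δ_ω = G(x,ω) - G(x_*,ω) - ⟨∇G(x_*,ω), x - x_*⟩` for the Bregman divergence of `G(·,ω)`.
For a convex function with `ν`-Lipschitz gradient the gradient difference is co-coercive,
`‖∇G(x,ω) - ∇G(x_*,ω)‖_*² ≤ 2ν Δ_ω`: the convex function `z ↦ G(z,ω) - ⟨∇G(x_*,ω), z⟩` is minimal
at `x_*`, while the descent lemma bounds it from above along every line through `x`, and the
discriminant of the resulting quadratic gives the claim. Taking expectations, `E Δ_ω` is the
Bregman divergence of `g`. Finally `ζ(x,ω) = a(ω) - E a + ζ(x_*,ω)` with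
`a(ω) = ∇G(x,ω) - ∇G(x_*,ω)`, and `‖E a‖² ≤ E‖a‖²` (Jensen) gives
`E‖ζ(x,ω)‖² ≤ 8 E‖a‖² + 2 ς_*² ≤ 16 ν E Δ_ω + 2 ς_*²`.
-/

open MeasureTheory

section LipschitzGradient

variable {E : Type*} [NormedAddCommGroup E] [NormedSpace ℝ E]
  {f : E → ℝ} {f' : E → E →L[ℝ] ℝ} {ν : ℝ}

lemma hasDerivAt_comp_add_smul (hf : ∀ x, HasFDerivAt f (f' x) x) (u d : E) (t : ℝ) :
    HasDerivAt (fun s : ℝ => f (u + s • d)) (f' (u + t • d) d) t := by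
  have hline : HasDerivAt (fun s : ℝ => u + s • d) d t := by
    simpa using ((hasDerivAt_id t).smul_const d).const_add u
  exact (hf (u + t • d)).comp_hasDerivAt t hline

theorem ConvexOn.add_fderiv_sub_le (hconv : ConvexOn ℝ Set.univ f)
    (hf : ∀ x, HasFDerivAt f (f' x) x) (x y : E) : f y + f' y (x - y) ≤ f x := by
  have hline : ConvexOn ℝ Set.univ (fun t : ℝ => f (y + t • (x - y))) := by
    simpa [Function.comp_def, AffineMap.lineMap_apply, add_comm] using
      hconv.comp_affineMap (AffineMap.lineMap y x : ℝ →ᵃ[ℝ] E)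
  have hd : HasDerivAt (fun t : ℝ => f (y + t • (x - y))) (f' y (x - y)) 0 := by
    simpa using hasDerivAt_comp_add_smul hf y (x - y) 0
  have h := hline.le_slope_of_hasDerivAt (Set.mem_univ 0) (Set.mem_univ 1) one_pos hd
  simp only [slope_def_field, one_smul, zero_smul, add_zero, add_sub_cancel, sub_zero,
    div_one] at h
  linarith

theorem le_add_fderiv_sub_add_sq_of_lipschitz (hf : ∀ x, HasFDerivAt f (f' x) x)
    (hlip : ∀ x y, ‖f' x - f' y‖ ≤ ν * ‖x - y‖) (u v : E) :
    f v ≤ f u + f' u (v - u) + ν / 2 * ‖v - u‖ ^ 2 := by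
  set d := v - u
  have hφ (t : ℝ) : HasDerivAt (fun s : ℝ => f (u + s • d) - s * f' u d)
      (f' (u + t • d) d - f' u d) t :=
    (hasDerivAt_comp_add_smul hf u d t).sub (hasDerivAt_mul_const _)
  have hB (t : ℝ) : HasDerivAt (fun s : ℝ => f u + ν / 2 * s ^ 2 * ‖d‖ ^ 2)
      (ν * t * ‖d‖ ^ 2) t :=
    ((((hasDerivAt_pow 2 t).const_mul (ν / 2)).mul_const _).const_add _).congr_deriv (by ring)
  have hslope {t : ℝ} (ht : 0 ≤ t) : f' (u + t • d) d - f' u d ≤ ν * t * ‖d‖ ^ 2 :=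
    calc f' (u + t • d) d - f' u d
        ≤ ‖f' (u + t • d) - f' u‖ * ‖d‖ := le_of_abs_le ((f' (u + t • d) - f' u).le_opNorm d)
      _ ≤ ν * ‖(u + t • d) - u‖ * ‖d‖ := by gcongr; exact hlip _ _
      _ = ν * t * ‖d‖ ^ 2 := by
        rw [add_sub_cancel_left, norm_smul, Real.norm_of_nonneg ht]; ring
  have h := image_le_of_deriv_right_le_deriv_boundary
    (fun t _ => (hφ t).continuousAt.continuousWithinAt) (fun t _ => (hφ t).hasDerivWithinAt)
    (by simp) (fun t _ => (hB t).continuousAt.continuousWithinAt)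
    (fun t _ => (hB t).hasDerivWithinAt) (fun t ht => hslope ht.1) (Set.right_mem_Icc.2 zero_le_one)
  simp only [one_smul, one_mul, one_pow, mul_one, d, add_sub_cancel] at h
  linarith

theorem ConvexOn.sq_norm_fderiv_sub_le (hν : 0 ≤ ν) (hconv : ConvexOn ℝ Set.univ f)
    (hf : ∀ x, HasFDerivAt f (f' x) x) (hlip : ∀ x y, ‖f' x - f' y‖ ≤ ν * ‖x - y‖) (x y : E) :
    ‖f' x - f' y‖ ^ 2 ≤ 2 * ν * (f x - f y - f' y (x - y)) := by
  set Δ := f x - f y - f' y (x - y)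
  set L := f' x - f' y
  have hΔ : 0 ≤ Δ := by linarith [hconv.add_fderiv_sub_le hf x y]
  have hφ (z : E) : HasFDerivAt (fun z => f z - f' y z) (f' z - f' y) z :=
    (hf z).sub (f' y).hasFDerivAt
  have hφlip (z z' : E) : ‖(f' z - f' y) - (f' z' - f' y)‖ ≤ ν * ‖z - z'‖ := by
    simpa using hlip z z'
  -- `z ↦ f z - f' y z` is minimal at `y`; the descent lemma bounds it at `x - t • w`.
  have hquad (w : E) (t : ℝ) : 0 ≤ ν / 2 * ‖w‖ ^ 2 * (t * t) + -L w * t + Δ := by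
    have hmin := hconv.add_fderiv_sub_le hf (x - t • w) y
    have hdesc := le_add_fderiv_sub_add_sq_of_lipschitz hφ hφlip x (x - t • w)
    simp only [sub_sub_cancel_left, norm_neg, norm_smul, Real.norm_eq_abs, mul_pow, sq_abs,
      map_neg, map_smul, smul_eq_mul, map_sub, sub_apply] at hdesc hmin
    simp only [L, Δ, sub_apply, map_sub]
    linarith
  have hw (w : E) : |L w| ≤ √(2 * ν * Δ) * ‖w‖ := by
    have hdisc := discrim_le_zero (hquad w)
    rw [discrim] at hdisc
    rw [← Real.sqrt_sq (norm_nonneg w), ← Real.sqrt_mul (by positivity)]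
    exact Real.abs_le_sqrt (by linarith)
  calc ‖L‖ ^ 2 ≤ √(2 * ν * Δ) ^ 2 :=
        pow_le_pow_left₀ (norm_nonneg _) (L.opNorm_le_bound (Real.sqrt_nonneg _) hw) 2
    _ = 2 * ν * Δ := Real.sq_sqrt (by positivity)

end LipschitzGradient

theorem norm_add_add_sq_le {F : Type*} [SeminormedAddCommGroup F] (u v w : F) :
    ‖u + v + w‖ ^ 2 ≤ 4 * ‖u‖ ^ 2 + 4 * ‖v‖ ^ 2 + 2 * ‖w‖ ^ 2 := by
  have h := norm_add₃_le (a := u) (b := v) (c := w)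
  nlinarith [norm_nonneg (u + v + w), norm_nonneg u, norm_nonneg v, norm_nonneg w,
    sq_nonneg (‖u‖ + ‖v‖ - ‖w‖), sq_nonneg (‖u‖ - ‖v‖)]

section Probability

variable {Ω : Type*} [MeasurableSpace Ω] {μ : Measure Ω} [IsProbabilityMeasure μ]
  {F : Type*} [NormedAddCommGroup F] [NormedSpace ℝ F] [CompleteSpace F]

theorem sq_norm_integral_le_integral_sq_norm {a : Ω → F} (ha : Integrable a μ)
    (ha2 : Integrable (fun ω => ‖a ω‖ ^ 2) μ) : ‖∫ ω, a ω ∂μ‖ ^ 2 ≤ ∫ ω, ‖a ω‖ ^ 2 ∂μ :=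
  (convexOn_univ_norm.pow (fun _ _ => norm_nonneg _) 2).map_integral_le
    (continuous_norm.pow 2).continuousOn isClosed_univ (by simp) ha ha2

theorem integral_sq_norm_sub_integral_add_le {a b : Ω → F} (ha : Integrable a μ)
    (ha2 : Integrable (fun ω => ‖a ω‖ ^ 2) μ) (hb2 : Integrable (fun ω => ‖b ω‖ ^ 2) μ) :
    ∫ ω, ‖a ω - ∫ ω', a ω' ∂μ + b ω‖ ^ 2 ∂μ ≤
      8 * ∫ ω, ‖a ω‖ ^ 2 ∂μ + 2 * ∫ ω, ‖b ω‖ ^ 2 ∂μ := by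
  set m := ∫ ω', a ω' ∂μ
  have hi : Integrable (fun ω => 4 * ‖a ω‖ ^ 2 + 4 * ‖-m‖ ^ 2) μ :=
    (ha2.const_mul 4).add (integrable_const _)
  calc ∫ ω, ‖a ω - m + b ω‖ ^ 2 ∂μ
      ≤ ∫ ω, (4 * ‖a ω‖ ^ 2 + 4 * ‖-m‖ ^ 2 + 2 * ‖b ω‖ ^ 2) ∂μ := by
        refine integral_mono_of_nonneg (.of_forall fun _ => by positivity)
          (hi.add (hb2.const_mul 2)) (.of_forall fun ω => ?_)
        simpa [sub_eq_add_neg] using norm_add_add_sq_le (a ω) (-m) (b ω)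
    _ = 4 * ∫ ω, ‖a ω‖ ^ 2 ∂μ + 4 * ‖m‖ ^ 2 + 2 * ∫ ω, ‖b ω‖ ^ 2 ∂μ := by
        rw [integral_add hi (hb2.const_mul 2), integral_add (ha2.const_mul 4) (integrable_const _),
          integral_const, norm_neg]
        simp [integral_const_mul]
    _ ≤ 8 * ∫ ω, ‖a ω‖ ^ 2 ∂μ + 2 * ∫ ω, ‖b ω‖ ^ 2 ∂μ := by
        linarith [sq_norm_integral_le_integral_sq_norm ha ha2]

end Probability

/-- If the stochastic gradient `∇G(·,ω)` is a.s. `ν`-Lipschitz and `G(·,ω)` is a.s. convex,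
then, with `ζ(x,ω) = ∇G(x,ω) - ∇g(x)` and `ς_*² = E[‖ζ(x_*,ω)‖_*²]`, for every `x`:
`E[‖ζ(x,ω)‖_*²] ≤ 16 ν (g x - g x_* - ⟨∇g(x_*), x - x_*⟩) + 2 ς_*²`. -/
theorem stmt4 {E : Type*} [NormedAddCommGroup E] [NormedSpace ℝ E]
    {Ω : Type*} [MeasurableSpace Ω] (μ : Measure Ω) [IsProbabilityMeasure μ]
    (G : Ω → E → ℝ) (DG : Ω → E → (E →L[ℝ] ℝ))
    (g : E → ℝ) (Dg : E → (E →L[ℝ] ℝ)) (ν : ℝ) (hν : 0 ≤ ν)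
    (hconv : ∀ᵐ ω ∂μ, ConvexOn ℝ Set.univ (G ω))
    (hderiv : ∀ᵐ ω ∂μ, ∀ x : E, HasFDerivAt (G ω) (DG ω x) x)
    (hLip : ∀ᵐ ω ∂μ, ∀ x y : E, ‖DG ω x - DG ω y‖ ≤ ν * ‖x - y‖)
    (hg : ∀ x : E, g x = ∫ ω, G ω x ∂μ)
    (hGint : ∀ x : E, Integrable (fun ω => G ω x) μ)
    (hDGint : ∀ x : E, Integrable (fun ω => DG ω x) μ)
    (hunbiased : ∀ x : E, ∫ ω, DG ω x ∂μ = Dg x)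
    (hζint : ∀ x : E, Integrable (fun ω => ‖DG ω x - Dg x‖ ^ 2) μ)
    (xstar : E) :
    ∀ x : E, ∫ ω, ‖DG ω x - Dg x‖ ^ 2 ∂μ ≤
      16 * ν * (g x - g xstar - Dg xstar (x - xstar)) +
        2 * ∫ ω, ‖DG ω xstar - Dg xstar‖ ^ 2 ∂μ := by
  intro x
  have ha : Integrable (fun ω => DG ω x - DG ω xstar) μ := (hDGint x).sub (hDGint xstar)
  have hmean : ∫ ω, (DG ω x - DG ω xstar) ∂μ = Dg x - Dg xstar := by
    rw [integral_sub (hDGint x) (hDGint xstar), hunbiased, hunbiased]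
  have hdiff : Integrable (fun ω => G ω x - G ω xstar) μ := (hGint x).sub (hGint xstar)
  have hlin : Integrable (fun ω => DG ω xstar (x - xstar)) μ :=
    (hDGint xstar).apply_continuousLinearMap _
  have hbreg_int : Integrable (fun ω => G ω x - G ω xstar - DG ω xstar (x - xstar)) μ :=
    hdiff.sub hlin
  have hbreg : ∫ ω, (G ω x - G ω xstar - DG ω xstar (x - xstar)) ∂μ =
      g x - g xstar - Dg xstar (x - xstar) := by
    rw [integral_sub hdiff hlin,
      integral_sub (hGint x) (hGint xstar), ← ContinuousLinearMap.integral_apply (hDGint xstar),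
      hunbiased, hg, hg]
  have hcoco : ∀ᵐ ω ∂μ, ‖DG ω x - DG ω xstar‖ ^ 2 ≤
      2 * ν * (G ω x - G ω xstar - DG ω xstar (x - xstar)) := by
    filter_upwards [hconv, hderiv, hLip] with ω hc hd hl
    exact hc.sq_norm_fderiv_sub_le hν hd hl x xstar
  have ha2 : Integrable (fun ω => ‖DG ω x - DG ω xstar‖ ^ 2) μ :=
    (hbreg_int.const_mul _).mono' (ha.norm.aestronglyMeasurable.pow 2)
      (hcoco.mono fun ω h => by rwa [Real.norm_of_nonneg (by positivity)])
  have hsplit : ∀ ω, DG ω x - Dg x =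
      (DG ω x - DG ω xstar) - ∫ ω', (DG ω' x - DG ω' xstar) ∂μ + (DG ω xstar - Dg xstar) := by
    intro ω; rw [hmean]; abel
  calc ∫ ω, ‖DG ω x - Dg x‖ ^ 2 ∂μ
      ≤ 8 * ∫ ω, ‖DG ω x - DG ω xstar‖ ^ 2 ∂μ + 2 * ∫ ω, ‖DG ω xstar - Dg xstar‖ ^ 2 ∂μ := by
        simpa only [← hsplit] using integral_sq_norm_sub_integral_add_le ha ha2 (hζint xstar)
    _ ≤ 16 * ν * (g x - g xstar - Dg xstar (x - xstar)) +
        2 * ∫ ω, ‖DG ω xstar - Dg xstar‖ ^ 2 ∂μ := by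
        have := integral_mono_ae ha2 (hbreg_int.const_mul _) hcoco
        rw [integral_const_mul, hbreg] at this
        linarith
end

section
/- Let φ ∈ ℝⁿ be a random vector with E[φφᵀ] = I and ‖φ‖_∞ ≤ r almost surely, and let ξ be a real random variable independent of φ with E[ξ]=0, E[ξ²] ≤ 1. Fix x_* ∈ ℝⁿ and define ζ(x) = [φφᵀ - I](x - x_*) - σξφ. Then E[‖ζ(x)‖_∞²] ≤ 4(r² + 1)‖x - x_*‖₂² + 2σ²r² for all x ∈ ℝⁿ. -/
/-! Writing `w = x - x_*`, the error is `ζ = ⟨φ, w⟩ φ - w - σξφ`. In the sup norm,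
`‖ζ‖² ≤ 4 r² ⟨φ, w⟩² + 4 ‖w‖² + 2 σ² ξ² ‖φ‖²` pointwise. Isotropy `E[φφᵀ] = I` gives
`E ⟨φ, w⟩² = ‖w‖₂²`, and independence factors `E[ξ² ‖φ‖²] = E[ξ²] E[‖φ‖²] ≤ r²`. -/

open MeasureTheory ProbabilityTheory

/-- The `ℓ∞`-norm (max-norm) of a vector of `ℝⁿ`. -/
noncomputable def linf {n : ℕ} (z : Fin n → ℝ) : ℝ := ⨆ i, |z i|

section

open Matrix

lemma linf_eq_norm {n : ℕ} (z : Fin n → ℝ) : linf z = ‖z‖ :=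
  le_antisymm (Real.iSup_le (fun i => norm_le_pi_norm z i) (norm_nonneg z))
    ((pi_norm_le_iff_of_nonneg (Real.iSup_nonneg fun i => abs_nonneg (z i))).2
      fun i => le_ciSup (f := fun i => |z i|) (Set.finite_range _).bddAbove i)

lemma Matrix.vecMulVec_self_sub_one_mulVec {ι R : Type*} [Fintype ι] [DecidableEq ι]
    [CommRing R] (p w : ι → R) : (vecMulVec p p - 1) *ᵥ w = (p ⬝ᵥ w) • p - w := by
  rw [sub_mulVec, vecMulVec_mulVec, one_mulVec, op_smul_eq_smul]

section NormBounds

variable {E : Type*} [SeminormedAddCommGroup E]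

lemma norm_sub_sq_le (a b : E) : ‖a - b‖ ^ 2 ≤ 2 * ‖a‖ ^ 2 + 2 * ‖b‖ ^ 2 :=
  (pow_le_pow_left₀ (norm_nonneg _) (norm_sub_le a b) 2).trans add_sq_le |>.trans_eq (mul_add ..)

variable [NormedSpace ℝ E] {p : E} {r : ℝ}

lemma norm_smul_sub_sq_le (hp : ‖p‖ ≤ r) (s : ℝ) (w : E) :
    ‖s • p - w‖ ^ 2 ≤ 2 * r ^ 2 * s ^ 2 + 2 * ‖w‖ ^ 2 := by
  have : ‖s • p‖ ^ 2 ≤ r ^ 2 * s ^ 2 := by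
    rw [norm_smul, mul_pow, Real.norm_eq_abs, sq_abs, mul_comm]
    gcongr
  linarith [norm_sub_sq_le (s • p) w]

lemma norm_smul_sub_sub_smul_sq_le (hp : ‖p‖ ≤ r) (s t : ℝ) (w : E) :
    ‖s • p - w - t • p‖ ^ 2 ≤ 4 * r ^ 2 * s ^ 2 + 4 * ‖w‖ ^ 2 + 2 * (t ^ 2 * ‖p‖ ^ 2) := by
  have : ‖t • p‖ ^ 2 = t ^ 2 * ‖p‖ ^ 2 := by rw [norm_smul, mul_pow, Real.norm_eq_abs, sq_abs]
  linarith [norm_sub_sq_le (s • p - w) (t • p), norm_smul_sub_sq_le hp s w]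

lemma sq_mul_norm_sq_le_norm_smul_sub_sub_smul_sq (hp : ‖p‖ ≤ r) (s t : ℝ) (w : E) :
    t ^ 2 * ‖p‖ ^ 2 ≤ 2 * ‖s • p - w - t • p‖ ^ 2 + 4 * r ^ 2 * s ^ 2 + 4 * ‖w‖ ^ 2 := by
  have : ‖t • p‖ ^ 2 = t ^ 2 * ‖p‖ ^ 2 := by rw [norm_smul, mul_pow, Real.norm_eq_abs, sq_abs]
  have := norm_sub_sq_le (s • p - w) (s • p - w - t • p)
  rw [sub_sub_cancel] at this
  linarith [norm_smul_sub_sq_le hp s w]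

end NormBounds

variable {Ω ι : Type*} [MeasurableSpace Ω] {μ : Measure Ω}

lemma memLp_two_apply_of_integral_mul_self {Φ : Ω → ι → ℝ} (hΦ : AEStronglyMeasurable Φ μ)
    {i : ι} (hi : ∫ ω, Φ ω i * Φ ω i ∂μ ≠ 0) : MemLp (fun ω => Φ ω i) 2 μ :=
  (memLp_two_iff_integrable_sq ((continuous_apply i).comp_aestronglyMeasurable hΦ)).2 <|
    by simpa only [sq] using Integrable.of_integral_ne_zero hi

variable [Fintype ι] [DecidableEq ι]

lemma integral_dotProduct_sq_of_isotropic {Φ : Ω → ι → ℝ} (hΦ : AEStronglyMeasurable Φ μ)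
    (hcov : ∀ i j, ∫ ω, Φ ω i * Φ ω j ∂μ = if i = j then 1 else 0) (w : ι → ℝ) :
    Integrable (fun ω => (Φ ω ⬝ᵥ w) ^ 2) μ ∧ ∫ ω, (Φ ω ⬝ᵥ w) ^ 2 ∂μ = w ⬝ᵥ w := by
  have hL2 (i : ι) : MemLp (fun ω => Φ ω i) 2 μ :=
    memLp_two_apply_of_integral_mul_self hΦ (by simp [hcov])
  refine ⟨MemLp.integrable_sq ?_, ?_⟩
  · exact memLp_finsetSum _ fun i _ => (hL2 i).mul_const (w i)
  have hexp (ω : Ω) : (Φ ω ⬝ᵥ w) ^ 2 = ∑ i, ∑ j, w i * w j * (Φ ω i * Φ ω j) := by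
    simp only [dotProduct, sq, Finset.sum_mul_sum]
    exact Finset.sum_congr rfl fun i _ => Finset.sum_congr rfl fun j _ => by ring
  have hint (i j : ι) : Integrable (fun ω => w i * w j * (Φ ω i * Φ ω j)) μ :=
    ((hL2 i).integrable_mul (hL2 j)).const_mul _
  simp_rw [hexp]
  rw [integral_finsetSum _ fun i _ => integrable_finsetSum _ fun j _ => hint i j]
  simp_rw [integral_finsetSum _ fun j _ => hint _ j, integral_const_mul, hcov]
  simp [dotProduct]

lemma integral_sq_mul_norm_sq_le_of_indepFun {E : Type*} [NormedAddCommGroup E]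
    [MeasurableSpace E] [OpensMeasurableSpace E] [IsProbabilityMeasure μ] {X : Ω → E}
    {ξ : Ω → ℝ} (hX : AEMeasurable X μ) (hξ : AEMeasurable ξ μ) (hindep : IndepFun X ξ μ)
    {r v : ℝ} (hbdd : ∀ᵐ ω ∂μ, ‖X ω‖ ≤ r) (hvar : ∫ ω, ξ ω ^ 2 ∂μ ≤ v) :
    ∫ ω, ξ ω ^ 2 * ‖X ω‖ ^ 2 ∂μ ≤ v * r ^ 2 := by
  have hfactor : ∫ ω, ξ ω ^ 2 * ‖X ω‖ ^ 2 ∂μ = (∫ ω, ξ ω ^ 2 ∂μ) * ∫ ω, ‖X ω‖ ^ 2 ∂μ :=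
    hindep.symm.integral_fun_comp_mul_comp hξ hX (f := (· ^ 2)) (g := (‖·‖ ^ 2))
      (continuous_pow 2).aestronglyMeasurable (continuous_norm.pow 2).aestronglyMeasurable
  have hX2 : ∫ ω, ‖X ω‖ ^ 2 ∂μ ≤ r ^ 2 := by
    simpa using integral_mono_of_nonneg (.of_forall fun ω => by positivity) (integrable_const _)
      (hbdd.mono fun ω h => pow_le_pow_left₀ (norm_nonneg _) h 2)
  have hξ2 : 0 ≤ ∫ ω, ξ ω ^ 2 ∂μ := integral_nonneg fun ω => sq_nonneg _
  rw [hfactor]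
  exact mul_le_mul hvar hX2 (integral_nonneg fun ω => by positivity) (hξ2.trans hvar)

theorem integral_norm_vecMulVec_sub_one_mulVec_sub_smul_sq_le [IsProbabilityMeasure μ]
    {Φ : Ω → ι → ℝ} {ξ : Ω → ℝ} {r : ℝ} (hΦ : AEMeasurable Φ μ) (hξ : AEMeasurable ξ μ)
    (hcov : ∀ i j, ∫ ω, Φ ω i * Φ ω j ∂μ = if i = j then 1 else 0)
    (hbdd : ∀ᵐ ω ∂μ, ‖Φ ω‖ ≤ r) (hindep : IndepFun Φ ξ μ) {v : ℝ}
    (hvar : ∫ ω, ξ ω ^ 2 ∂μ ≤ v) (σ : ℝ) (w : ι → ℝ) :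
    ∫ ω, ‖(vecMulVec (Φ ω) (Φ ω) - 1) *ᵥ w - (σ * ξ ω) • Φ ω‖ ^ 2 ∂μ
      ≤ 4 * r ^ 2 * (w ⬝ᵥ w) + 4 * ‖w‖ ^ 2 + 2 * σ ^ 2 * v * r ^ 2 := by
  simp_rw [vecMulVec_self_sub_one_mulVec]
  obtain ⟨hS2int, hS2⟩ := integral_dotProduct_sq_of_isotropic hΦ.aestronglyMeasurable hcov w
  by_cases hF : Integrable (fun ω => ‖(Φ ω ⬝ᵥ w) • Φ ω - w - (σ * ξ ω) • Φ ω‖ ^ 2) μ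
  swap
  · have : 0 ≤ v := (integral_nonneg fun _ => sq_nonneg _).trans hvar
    have : 0 ≤ w ⬝ᵥ w := hS2 ▸ integral_nonneg fun _ => sq_nonneg _
    rw [integral_undef hF]
    positivity
  have hmajor : Integrable (fun ω => 4 * r ^ 2 * (Φ ω ⬝ᵥ w) ^ 2 + 4 * ‖w‖ ^ 2) μ :=
    (hS2int.const_mul _).add (integrable_const _)
  -- `hvar` does not make `ξ ^ 2` integrable (its integral may be the junk value `0`), so the
  -- integrability of the noise term is read off from that of the error itself.
  have hnoise : Integrable (fun ω => (σ * ξ ω) ^ 2 * ‖Φ ω‖ ^ 2) μ := by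
    refine ((hF.const_mul 2).add hmajor).mono' (by fun_prop) (hbdd.mono fun ω h => ?_)
    simp only [Pi.add_apply, Real.norm_of_nonneg (by positivity : 0 ≤ (σ * ξ ω) ^ 2 * ‖Φ ω‖ ^ 2)]
    linarith [sq_mul_norm_sq_le_norm_smul_sub_sub_smul_sq h (Φ ω ⬝ᵥ w) (σ * ξ ω) w]
  have hnoise_le : ∫ ω, (σ * ξ ω) ^ 2 * ‖Φ ω‖ ^ 2 ∂μ ≤ σ ^ 2 * (v * r ^ 2) := by
    simp_rw [mul_pow, mul_assoc, integral_const_mul]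
    simpa using mul_le_mul_of_nonneg_left
      (integral_sq_mul_norm_sq_le_of_indepFun hΦ hξ hindep hbdd hvar) (sq_nonneg σ)
  calc ∫ ω, ‖(Φ ω ⬝ᵥ w) • Φ ω - w - (σ * ξ ω) • Φ ω‖ ^ 2 ∂μ
      ≤ ∫ ω, 4 * r ^ 2 * (Φ ω ⬝ᵥ w) ^ 2 + 4 * ‖w‖ ^ 2
          + 2 * ((σ * ξ ω) ^ 2 * ‖Φ ω‖ ^ 2) ∂μ :=
        integral_mono_ae hF (hmajor.add (hnoise.const_mul 2))
          (hbdd.mono fun ω h => norm_smul_sub_sub_smul_sq_le h _ _ w)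
    _ = 4 * r ^ 2 * (w ⬝ᵥ w) + 4 * ‖w‖ ^ 2
          + 2 * ∫ ω, (σ * ξ ω) ^ 2 * ‖Φ ω‖ ^ 2 ∂μ := by
        rw [integral_add hmajor (hnoise.const_mul 2), integral_add (hS2int.const_mul _)
          (integrable_const _), integral_const_mul, integral_const_mul, integral_const_mul, hS2]
        simp
    _ ≤ 4 * r ^ 2 * (w ⬝ᵥ w) + 4 * ‖w‖ ^ 2 + 2 * σ ^ 2 * v * r ^ 2 := by linarith

end

theorem stmt5_general {n : ℕ} {Ω : Type*} [MeasurableSpace Ω] (μ : Measure Ω)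
    [IsProbabilityMeasure μ]
    (φ : Ω → EuclideanSpace ℝ (Fin n)) (ξ : Ω → ℝ) (r σ : ℝ)
    (hφmeas : Measurable φ) (hξmeas : Measurable ξ)
    (hcov : ∀ i j, ∫ ω, φ ω i * φ ω j ∂μ = if i = j then (1 : ℝ) else 0)
    (hbdd : ∀ᵐ ω ∂μ, ∀ i, |φ ω i| ≤ r)
    (hindep : IndepFun φ ξ μ)
    (hvar : ∫ ω, (ξ ω) ^ 2 ∂μ ≤ 1)
    (xstar x : EuclideanSpace ℝ (Fin n)) :
    ∫ ω, (linf (fun i =>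
        (∑ j, (φ ω i * φ ω j - if i = j then (1 : ℝ) else 0) * (x j - xstar j))
          - σ * ξ ω * φ ω i)) ^ 2 ∂μ
      ≤ 4 * (r ^ 2 + 1) * ‖x - xstar‖ ^ 2 + 2 * σ ^ 2 * r ^ 2 := by
  have hΦbdd : ∀ᵐ ω ∂μ, ‖(φ ω).ofLp‖ ≤ |r| := hbdd.mono fun ω h =>
    (pi_norm_le_iff_of_nonneg (abs_nonneg r)).2 fun i => (h i).trans (le_abs_self r)
  have hmain := integral_norm_vecMulVec_sub_one_mulVec_sub_smul_sq_le
    ((WithLp.measurable_ofLp 2 _).comp hφmeas).aemeasurable hξmeas.aemeasurable hcov hΦbdd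
    (hindep.comp (WithLp.measurable_ofLp 2 _) measurable_id) hvar σ (x - xstar).ofLp
  have hww : dotProduct (x - xstar).ofLp (x - xstar).ofLp = ‖x - xstar‖ ^ 2 := by
    rw [EuclideanSpace.real_norm_sq_eq]
    simp [dotProduct, sq]
  have hw : ‖(x - xstar).ofLp‖ ≤ ‖x - xstar‖ :=
    (pi_norm_le_iff_of_nonneg (norm_nonneg _)).2 (PiLp.norm_apply_le _)
  simp_rw [linf_eq_norm]
  rw [sq_abs, hww, mul_one] at hmain
  -- the integrand is definitionally the one of `hmain`: `mulVec` and `1 : Matrix` unfold to it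
  refine hmain.trans ?_
  nlinarith [pow_le_pow_left₀ (norm_nonneg _) hw 2]

/-- For the linear regression oracle with `E[φφᵀ] = I`, `‖φ‖_∞ ≤ r` a.s., and noise `ξ`
independent of `φ` with zero mean and variance at most one, the oracle error
`ζ(x) = [φφᵀ - I](x - x_*) - σξφ` satisfies
`E[‖ζ(x)‖_∞²] ≤ 4 (r² + 1) ‖x - x_*‖₂² + 2 σ² r²`. -/
theorem stmt5 {n : ℕ} {Ω : Type*} [MeasurableSpace Ω] (μ : Measure Ω)
    [IsProbabilityMeasure μ]
    (φ : Ω → EuclideanSpace ℝ (Fin n)) (ξ : Ω → ℝ) (r σ : ℝ) (hσ : 0 ≤ σ)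
    (hφmeas : Measurable φ) (hξmeas : Measurable ξ)
    (hcov : ∀ i j, ∫ ω, φ ω i * φ ω j ∂μ = if i = j then (1 : ℝ) else 0)
    (hbdd : ∀ᵐ ω ∂μ, ∀ i, |φ ω i| ≤ r)
    (hindep : IndepFun φ ξ μ)
    (hmean : ∫ ω, ξ ω ∂μ = 0) (hvar : ∫ ω, (ξ ω) ^ 2 ∂μ ≤ 1)
    (xstar x : EuclideanSpace ℝ (Fin n))
    (hint : Integrable (fun ω =>
      (linf (fun i => (∑ j, (φ ω i * φ ω j - if i = j then (1 : ℝ) else 0) * (x j - xstar j))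
        - σ * ξ ω * φ ω i)) ^ 2) μ) :
    ∫ ω, (linf (fun i =>
        (∑ j, (φ ω i * φ ω j - if i = j then (1 : ℝ) else 0) * (x j - xstar j))
          - σ * ξ ω * φ ω i)) ^ 2 ∂μ
      ≤ 4 * (r ^ 2 + 1) * ‖x - xstar‖ ^ 2 + 2 * σ ^ 2 * r ^ 2 :=
  stmt5_general μ φ ξ r σ hφmeas hξmeas hcov hbdd hindep hvar xstar x
end

section
/- Let φ = √Z · η where Z > 0 is a scalar random variable with E[Z²] < ∞, independent of a random vector η ∈ ℝⁿ with E[ηηᵀ] = Σ₀, and suppose E[(zᵀη·ηᵀx)²] ≤ χ·‖z‖_{Σ₀}²·‖x‖_{Σ₀}² for all x, z. Then with Σ = E[φφᵀ] = E[Z]·Σ₀, one has E[(zᵀφ·φᵀx)²] ≤ χ·(E[Z²]/E[Z]²)·‖z‖_Σ²·‖x‖_Σ² for all x, z ∈ ℝⁿ. -/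
/-!
Since `Z` is independent of `η`, every moment of `φ = √Z • η` that is homogeneous of degree `2k`
factors as `E[Z^k]` times the same moment of `η`. For `k = 1` this gives `E[φφᵀ] = E[Z] Σ₀`; for
`k = 2` it gives `E[(zᵀφ φᵀx)²] = E[Z²] E[(zᵀη ηᵀx)²]`, and rewriting the bound on the latter
in terms of `Σ = E[Z] Σ₀` costs the factor `E[Z²] / E[Z]²`, where `E[Z] > 0` because `Z > 0`
almost surely.
-/

open MeasureTheory ProbabilityTheory Finset

theorem integral_pos_of_ae_pos {α : Type*} [MeasurableSpace α] {μ : Measure α} [NeZero μ]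
    {f : α → ℝ} (hf : ∀ᵐ x ∂μ, 0 < f x) (hfi : Integrable f μ) : 0 < ∫ x, f x ∂μ := by
  rw [integral_pos_iff_support_of_nonneg_ae (hf.mono fun _ hx => hx.le) hfi, pos_iff_ne_zero]
  exact frequently_ae_iff.1 (hf.mono fun _ hx => hx.ne').frequently

theorem integral_comp_sqrt_smul_of_indepFun {Ω E : Type*} [MeasurableSpace Ω]
    [AddCommGroup E] [Module ℝ E] [MeasurableSpace E] {μ : Measure Ω} {Z : Ω → ℝ} {η : Ω → E}
    (hZ : ∀ᵐ ω ∂μ, 0 ≤ Z ω) (hZm : AEMeasurable Z μ) (hηm : AEMeasurable η μ)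
    (hind : IndepFun Z η μ) {k : ℕ} {g : E → ℝ} (hg : Measurable g)
    (hg_hom : ∀ (s : ℝ) v, g (s • v) = s ^ (2 * k) * g v) :
    ∫ ω, g (√(Z ω) • η ω) ∂μ = (∫ ω, Z ω ^ k ∂μ) * ∫ ω, g (η ω) ∂μ := by
  have hscale : (fun ω => g (√(Z ω) • η ω)) =ᵐ[μ] fun ω => Z ω ^ k * g (η ω) := by
    filter_upwards [hZ] with ω hω
    rw [hg_hom, pow_mul, Real.sq_sqrt hω]
  rw [integral_congr_ae hscale]
  exact hind.integral_fun_comp_mul_comp (f := fun t => t ^ k) hZm hηm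
    (by fun_prop) hg.aestronglyMeasurable

theorem EuclideanSpace.smul_apply_mul_smul_apply {ι : Type*} (s : ℝ) (v : EuclideanSpace ℝ ι)
    (i j : ι) :
    (s • v) i * (s • v) j = s ^ (2 * 1) * (v i * v j) := by
  simp only [PiLp.smul_apply, smul_eq_mul]
  ring

theorem EuclideanSpace.sq_sum_mul_smul_apply_mul_sum {ι : Type*} [Fintype ι] (s : ℝ)
    (v z x : EuclideanSpace ℝ ι) :
    ((∑ i, z i * (s • v) i) * ∑ i, (s • v) i * x i) ^ 2
      = s ^ (2 * 2) * ((∑ i, z i * v i) * ∑ i, v i * x i) ^ 2 := by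
  simp only [PiLp.smul_apply, smul_eq_mul, mul_left_comm (z _) s, mul_assoc s, ← mul_sum]
  ring

theorem stmt11_general {n : ℕ} {Ω : Type*} [MeasurableSpace Ω] (μ : Measure Ω)
    [IsProbabilityMeasure μ]
    (Z : Ω → ℝ) (η φ : Ω → EuclideanSpace ℝ (Fin n))
    (Sig0 : Matrix (Fin n) (Fin n) ℝ) (χ : ℝ)
    (hφ : ∀ ω, φ ω = Real.sqrt (Z ω) • η ω)
    (hZpos : ∀ᵐ ω ∂μ, 0 < Z ω)
    (hηmeas : Measurable η)
    (hZ1 : Integrable Z μ)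
    (hindep : IndepFun Z η μ)
    (hSig0 : ∀ i j, Sig0 i j = ∫ ω, η ω i * η ω j ∂μ)
    (hη4 : ∀ x z : EuclideanSpace ℝ (Fin n),
      ∫ ω, ((∑ i, z i * η ω i) * (∑ i, η ω i * x i)) ^ 2 ∂μ
        ≤ χ * (∑ i, ∑ j, z i * Sig0 i j * z j) * (∑ i, ∑ j, x i * Sig0 i j * x j)) :
    (∀ i j, ∫ ω, φ ω i * φ ω j ∂μ = (∫ ω, Z ω ∂μ) * Sig0 i j) ∧
    ∀ x z : EuclideanSpace ℝ (Fin n),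
      ∫ ω, ((∑ i, z i * φ ω i) * (∑ i, φ ω i * x i)) ^ 2 ∂μ
        ≤ χ * ((∫ ω, (Z ω) ^ 2 ∂μ) / (∫ ω, Z ω ∂μ) ^ 2) *
          ((∫ ω, Z ω ∂μ) * ∑ i, ∑ j, z i * Sig0 i j * z j) *
          ((∫ ω, Z ω ∂μ) * ∑ i, ∑ j, x i * Sig0 i j * x j) := by
  have hmean : 0 < ∫ ω, Z ω ∂μ := integral_pos_of_ae_pos hZpos hZ1
  have hmix {k : ℕ} {g : EuclideanSpace ℝ (Fin n) → ℝ} :=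
    integral_comp_sqrt_smul_of_indepFun (k := k) (g := g) (hZpos.mono fun _ h => h.le)
      hZ1.aemeasurable hηmeas.aemeasurable hindep
  simp only [hφ]
  refine ⟨fun i j => ?_, fun x z => ?_⟩
  · rw [hmix (g := fun v => v i * v j) (by fun_prop)
      (EuclideanSpace.smul_apply_mul_smul_apply · · i j)]
    simp only [pow_one, hSig0]
  · rw [hmix (g := fun v => ((∑ i, z i * v i) * ∑ i, v i * x i) ^ 2) (by fun_prop)
      (EuclideanSpace.sq_sum_mul_smul_apply_mul_sum · · z x)]
    calc (∫ ω, Z ω ^ 2 ∂μ) * ∫ ω, ((∑ i, z i * η ω i) * ∑ i, η ω i * x i) ^ 2 ∂μ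
        ≤ (∫ ω, Z ω ^ 2 ∂μ) * (χ * (∑ i, ∑ j, z i * Sig0 i j * z j) *
            ∑ i, ∑ j, x i * Sig0 i j * x j) :=
          mul_le_mul_of_nonneg_left (hη4 x z) (integral_nonneg fun ω => sq_nonneg _)
      _ = _ := by field_simp

/-- Scale mixtures: if `φ = √Z · η` with `Z > 0` a.s., `E[Z²] < ∞`, `Z` independent of `η`,
`Sig0 = E[ηηᵀ]`, and `E[(zᵀη ηᵀx)²] ≤ χ ‖z‖_{Sig0}² ‖x‖_{Sig0}²`, then with `Σ = E[Z] Sig0`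
(which equals `E[φφᵀ]`) one has
`E[(zᵀφ φᵀx)²] ≤ χ (E[Z²]/E[Z]²) ‖z‖_Σ² ‖x‖_Σ²`. -/
theorem stmt11 {n : ℕ} {Ω : Type*} [MeasurableSpace Ω] (μ : Measure Ω)
    [IsProbabilityMeasure μ]
    (Z : Ω → ℝ) (η φ : Ω → EuclideanSpace ℝ (Fin n))
    (Sig0 : Matrix (Fin n) (Fin n) ℝ) (χ : ℝ)
    (hφ : ∀ ω, φ ω = Real.sqrt (Z ω) • η ω)
    (hZpos : ∀ᵐ ω ∂μ, 0 < Z ω)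
    (hZmeas : Measurable Z) (hηmeas : Measurable η)
    (hZ1 : Integrable Z μ) (hZ2 : Integrable (fun ω => (Z ω) ^ 2) μ)
    (hη2 : ∀ i j, Integrable (fun ω => η ω i * η ω j) μ)
    (hindep : IndepFun Z η μ)
    (hSig0 : ∀ i j, Sig0 i j = ∫ ω, η ω i * η ω j ∂μ)
    (hη4 : ∀ x z : EuclideanSpace ℝ (Fin n),
      ∫ ω, ((∑ i, z i * η ω i) * (∑ i, η ω i * x i)) ^ 2 ∂μ
        ≤ χ * (∑ i, ∑ j, z i * Sig0 i j * z j) * (∑ i, ∑ j, x i * Sig0 i j * x j)) :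
    (∀ i j, ∫ ω, φ ω i * φ ω j ∂μ = (∫ ω, Z ω ∂μ) * Sig0 i j) ∧
    ∀ x z : EuclideanSpace ℝ (Fin n),
      ∫ ω, ((∑ i, z i * φ ω i) * (∑ i, φ ω i * x i)) ^ 2 ∂μ
        ≤ χ * ((∫ ω, (Z ω) ^ 2 ∂μ) / (∫ ω, Z ω ∂μ) ^ 2) *
          ((∫ ω, Z ω ∂μ) * ∑ i, ∑ j, z i * Sig0 i j * z j) *
          ((∫ ω, Z ω ∂μ) * ∑ i, ∑ j, x i * Sig0 i j * x j) :=
  stmt11_general μ Z η φ Sig0 χ hφ hZpos hηmeas hZ1 hindep hSig0 hη4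
end

section
/- Let u : [0,1] → ℝ be convex and differentiable with M-Lipschitz derivative, let u_* = min_{t∈[0,1]} u(t), and let t_i = (2i-1)/(2m) for i = 1,...,m. Then |(u(1) - u(0)) - (1/m)·Σ_{i=1}^m u'(t_i)| ≤ (1/(4m))·[√(2M(u(1)-u_*)) + √(2M(u(0)-u_*))]. -/
/-!
Write `h = 1/(2m)` and `D(x, y) = u y - u x - u' x (y - x)` (Bregman divergence). On the
`i`-th cell the error is `D(tᵢ, tᵢ + h) - D(tᵢ, tᵢ - h)`, and both divergences lie in
`[0, M h² / 2]`. When `u' 1 ≤ 0`, the identity `(q - p) (φ p - φ q) = p D(p, q) + q D(q, p)` for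
the tangent intercept `φ x = u x - x u' x` makes `Σ (2i+1) (D(tᵢ, tᵢ + h) + D(tᵢ, tᵢ - h))`
telescope to at most `u 0 - u 1`; then `(Σ αᵢ)² ≤ K Σ (2i+1) αᵢ` for `0 ≤ αᵢ ≤ K` bounds each of
the two sums by `√(M h² (u 0 - u 1) / 2) = √(2 M (u 0 - u 1)) / (4m)`. The case `0 ≤ u' 0`
follows by the reflection `x ↦ 1 - x`, which preserves the midpoint rule. Otherwise `u'` vanishes
at some `c`, and `u` splits into `u (min x c)` and `u (max x c)`, one of each kind.
-/

open Set Finset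

namespace MidpointRule

def bregman (u g : ℝ → ℝ) (x y : ℝ) : ℝ := u y - u x - g x * (y - x)

/-- Convexity of `u` and `M`-Lipschitz continuity of its derivative `g`, in Bregman form
(see `bregmanBounds_of_convexOn`). -/
def BregmanBounds (M : ℝ) (s : Set ℝ) (u g : ℝ → ℝ) : Prop :=
  ∀ x ∈ s, ∀ y ∈ s, 0 ≤ bregman u g x y ∧ bregman u g x y ≤ M / 2 * (y - x) ^ 2

variable {u g : ℝ → ℝ} {M : ℝ} {s : Set ℝ}

theorem bregman_add_bregman_swap (u g : ℝ → ℝ) (x y : ℝ) :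
    bregman u g x y + bregman u g y x = (g y - g x) * (y - x) := by
  unfold bregman; ring

theorem bregman_nonneg_of_convexOn (hu : ConvexOn ℝ s u) {x y : ℝ} (hx : x ∈ s) (hy : y ∈ s)
    (hd : HasDerivWithinAt u (g x) s x) : 0 ≤ bregman u g x y := by
  unfold bregman
  rcases lt_trichotomy x y with hxy | rfl | hxy
  · have := hu.le_slope_of_hasDerivWithinAt hx hy hxy hd
    rw [slope_def_field, le_div_iff₀ (sub_pos.2 hxy)] at this
    linarith
  · simp
  · have := hu.slope_le_of_hasDerivWithinAt hy hx hxy hd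
    rw [slope_def_field, div_le_iff₀ (sub_pos.2 hxy)] at this
    linarith

theorem bregman_le_of_lipschitz (hs : Convex ℝ s) (hd : ∀ t ∈ s, HasDerivWithinAt u (g t) s t)
    (hL : ∀ t ∈ s, ∀ t' ∈ s, |g t - g t'| ≤ M * |t - t'|) {x y : ℝ} (hx : x ∈ s) (hy : y ∈ s) :
    bregman u g x y ≤ M / 2 * (y - x) ^ 2 := by
  set F : ℝ → ℝ := fun t => bregman u g x t - M / 2 * (t - x) ^ 2
  have hF : ∀ t ∈ s, HasDerivWithinAt F (g t - g x - M * (t - x)) s t := fun t ht => by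
    have hlin : HasDerivAt (fun t : ℝ => t - x) 1 t := (hasDerivAt_id' t).sub_const x
    exact ((((hd t ht).sub_const (u x)).sub (hlin.const_mul (g x)).hasDerivWithinAt).sub
      ((hlin.pow 2).const_mul (M / 2)).hasDerivWithinAt).congr_deriv (by ring)
  have hFx : F x = 0 := by simp [F, bregman]
  have hF_Icc : ∀ {a b : ℝ}, a ∈ s → b ∈ s → (∀ t ∈ Ioo a b, HasDerivWithinAt F
      (g t - g x - M * (t - x)) (interior (Icc a b)) t) ∧ ContinuousOn F (Icc a b) := by
    intro a b ha hb
    have hsub : Icc a b ⊆ s := hs.ordConnected.out ha hb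
    exact ⟨fun t ht => (hF t (hsub (Ioo_subset_Icc_self ht))).mono
      (interior_subset.trans hsub), fun t ht => (hF t (hsub ht)).continuousWithinAt.mono hsub⟩
  -- `F` increases up to `x` and decreases after it, because `|g t - g x| ≤ M |t - x|`.
  suffices F y ≤ 0 by simp only [F] at this; linarith
  rcases le_total x y with hxy | hxy
  · refine hFx ▸ antitoneOn_of_hasDerivWithinAt_nonpos (convex_Icc x y) (hF_Icc hx hy).2
      (by simpa using (hF_Icc hx hy).1) (fun t ht => ?_) (left_mem_Icc.2 hxy)
      (right_mem_Icc.2 hxy) hxy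
    rw [interior_Icc] at ht
    have := hL t (hs.ordConnected.out hx hy (Ioo_subset_Icc_self ht)) x hx
    rw [abs_of_pos (sub_pos.2 ht.1)] at this
    linarith [le_abs_self (g t - g x)]
  · refine hFx ▸ monotoneOn_of_hasDerivWithinAt_nonneg (convex_Icc y x) (hF_Icc hy hx).2
      (by simpa using (hF_Icc hy hx).1) (fun t ht => ?_) (left_mem_Icc.2 hxy)
      (right_mem_Icc.2 hxy) hxy
    rw [interior_Icc] at ht
    have := hL x hx t (hs.ordConnected.out hy hx (Ioo_subset_Icc_self ht))
    rw [abs_of_pos (sub_pos.2 ht.2)] at this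
    linarith [le_abs_self (g x - g t)]

theorem bregmanBounds_of_convexOn (hu : ConvexOn ℝ s u)
    (hd : ∀ t ∈ s, HasDerivWithinAt u (g t) s t)
    (hL : ∀ t ∈ s, ∀ t' ∈ s, |g t - g t'| ≤ M * |t - t'|) : BregmanBounds M s u g :=
  fun _ hx _ hy => ⟨bregman_nonneg_of_convexOn hu hx hy (hd _ hx),
    bregman_le_of_lipschitz hu.1 hd hL hx hy⟩

namespace BregmanBounds

theorem sub_mul_sub_bounds (hu : BregmanBounds M s u g) {x y : ℝ} (hx : x ∈ s) (hy : y ∈ s) :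
    0 ≤ (g y - g x) * (y - x) ∧ (g y - g x) * (y - x) ≤ M * (y - x) ^ 2 := by
  rw [← bregman_add_bregman_swap]
  obtain ⟨h₁, h₂⟩ := hu x hx y hy
  obtain ⟨h₃, h₄⟩ := hu y hy x hx
  constructor <;> nlinarith

theorem monotoneOn (hu : BregmanBounds M s u g) : MonotoneOn g s := by
  intro x hx y hy hxy
  rcases hxy.eq_or_lt with rfl | hxy
  · rfl
  · exact sub_nonneg.1 (nonneg_of_mul_nonneg_left (hu.sub_mul_sub_bounds hx hy).1 (sub_pos.2 hxy))

theorem sub_le_mul_sub (hu : BregmanBounds M s u g) {x y : ℝ} (hx : x ∈ s) (hy : y ∈ s)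
    (hxy : x < y) : g y - g x ≤ M * (y - x) := by
  have := (hu.sub_mul_sub_bounds hx hy).2
  rw [sq, ← mul_assoc] at this
  exact le_of_mul_le_mul_right this (sub_pos.2 hxy)

theorem lipschitzOnWith (hu : BregmanBounds M s u g) : LipschitzOnWith M.toNNReal g s := by
  refine LipschitzOnWith.of_dist_le_mul fun x hx y hy => ?_
  rw [Real.dist_eq, Real.dist_eq]
  refine le_trans ?_ (mul_le_mul_of_nonneg_right (Real.le_coe_toNNReal M) (abs_nonneg _))
  rcases lt_trichotomy x y with hxy | rfl | hxy
  · rw [abs_sub_comm, abs_sub_comm x, abs_of_nonneg (sub_nonneg.2 (hu.monotoneOn hx hy hxy.le)),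
      abs_of_pos (sub_pos.2 hxy)]
    exact hu.sub_le_mul_sub hx hy hxy
  · simp
  · rw [abs_of_nonneg (sub_nonneg.2 (hu.monotoneOn hy hx hxy.le)), abs_of_pos (sub_pos.2 hxy)]
    exact hu.sub_le_mul_sub hy hx hxy

theorem comp_sub_left (hu : BregmanBounds M s u g) (a : ℝ) :
    BregmanBounds M ((a - ·) ⁻¹' s) (fun x => u (a - x)) (fun x => -g (a - x)) := by
  intro x hx y hy
  have e : bregman (fun x => u (a - x)) (fun x => -g (a - x)) x y
      = bregman u g (a - x) (a - y) := by
    unfold bregman; ring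
  rw [e, show (y - x) ^ 2 = ((a - y) - (a - x)) ^ 2 by ring]
  exact hu _ hx _ hy

theorem comp_min (hu : BregmanBounds M s u g) {c : ℝ} (hc : c ∈ s) (hgc : g c = 0) :
    BregmanBounds M s (fun x => u (min x c)) (fun x => g (min x c)) := by
  intro x hx y hy
  have hmin : ∀ {z}, z ∈ s → min z c ∈ s := fun hz => by
    rcases min_choice _ c with h | h <;> rw [h] <;> assumption
  simp only [bregman]
  rcases le_or_gt c x with hcx | hxc
  · rw [min_eq_right hcx, hgc, zero_mul, sub_zero]
    have := hu c hc _ (hmin hy)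
    simp only [bregman, hgc, zero_mul, sub_zero] at this
    refine ⟨this.1, this.2.trans ?_⟩
    rcases le_or_gt c y with hcy | hyc
    · simpa [min_eq_right hcy] using (hu x hx y hy).1.trans (hu x hx y hy).2
    · have hM : 0 ≤ M := by
        have := hu.sub_le_mul_sub hy hx (hyc.trans_le hcx)
        nlinarith [hu.monotoneOn hy hx (hyc.trans_le hcx).le]
      rw [min_eq_left hyc.le]
      nlinarith [mul_nonneg hM (mul_nonneg (sub_nonneg.2 hcx) (by linarith : 0 ≤ x + c - 2 * y))]
  rw [min_eq_left hxc.le]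
  rcases le_total y c with hyc | hcy
  · rw [min_eq_left hyc]
    exact hu x hx y hy
  rw [min_eq_right hcy]
  obtain ⟨h₁, h₂⟩ := hu x hx c hc
  have hgx : g x ≤ 0 := hgc ▸ hu.monotoneOn hx hc hxc.le
  have hgx' : -g x ≤ M * (c - x) := by simpa [hgc] using hu.sub_le_mul_sub hx hc hxc
  have hM : 0 ≤ M := nonneg_of_mul_nonneg_left (by linarith) (sub_pos.2 hxc)
  have := mul_le_mul_of_nonneg_right hgx' (sub_nonneg.2 hcy)
  unfold bregman at h₁ h₂
  constructor <;> nlinarith [mul_nonneg hM (sq_nonneg (y - c))]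

theorem comp_max (hu : BregmanBounds M s u g) {c : ℝ} (hc : c ∈ s) (hgc : g c = 0) :
    BregmanBounds M s (fun x => u (max x c)) (fun x => g (max x c)) := by
  have := ((hu.comp_sub_left 0).comp_min (c := 0 - c) (by simpa using hc)
    (by simp [hgc])).comp_sub_left 0
  convert this using 1
  · ext; simp
  · ext; simp [min_neg_neg]
  · ext; simp [min_neg_neg]

end BregmanBounds

theorem sq_sum_le_mul_sum_odd_mul {α : ℕ → ℝ} {K : ℝ} {n : ℕ} (h₀ : ∀ i < n, 0 ≤ α i)
    (hK : ∀ i < n, α i ≤ K) :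
    (∑ i ∈ range n, α i) ^ 2 ≤ K * ∑ i ∈ range n, (2 * i + 1) * α i := by
  induction n with
  | zero => simp
  | succ n ih =>
    have hS : ∑ i ∈ range n, α i ≤ n * K := by
      simpa using sum_le_sum fun i hi => hK i (Nat.lt_succ_of_lt (mem_range.1 hi))
    have ihn := ih (fun i hi => h₀ i (by omega)) (fun i hi => hK i (by omega))
    have hn₀ := h₀ n (by omega)
    have hnK := hK n (by omega)
    rw [sum_range_succ, sum_range_succ]
    nlinarith [mul_le_mul_of_nonneg_right hS hn₀, mul_le_mul_of_nonneg_right hnK hn₀]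

theorem sum_le_sqrt_of_sum_odd_mul_le {α : ℕ → ℝ} {K D : ℝ} {n : ℕ} (hK₀ : 0 ≤ K)
    (h₀ : ∀ i < n, 0 ≤ α i) (hK : ∀ i < n, α i ≤ K) (hD : ∑ i ∈ range n, (2 * i + 1) * α i ≤ D) :
    ∑ i ∈ range n, α i ≤ √(K * D) :=
  Real.le_sqrt_of_sq_le <| (sq_sum_le_mul_sum_odd_mul h₀ hK).trans
    (mul_le_mul_of_nonneg_left hD hK₀)

def tangentIntercept (u g : ℝ → ℝ) (x : ℝ) : ℝ := u x - x * g x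

-- Sum of `(q - p) (φ p - φ q) = p D(p, q) + q D(q, p)` over the two halves of `[t - h, t + h]`.
theorem mul_bregman_add_bregman_le {t h : ℝ} (hh : 0 ≤ h) (hth : h ≤ t)
    (h₁ : 0 ≤ bregman u g (t + h) t) (h₂ : 0 ≤ bregman u g (t - h) t) :
    t * (bregman u g t (t + h) + bregman u g t (t - h))
      ≤ h * (tangentIntercept u g (t - h) - tangentIntercept u g (t + h)) := by
  have := mul_nonneg (by linarith : 0 ≤ t + h) h₁
  have := mul_nonneg (sub_nonneg.2 hth) h₂
  unfold bregman tangentIntercept at *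
  linarith

noncomputable def midpointNode (m i : ℕ) : ℝ := (2 * i + 1) / (2 * m)

noncomputable def midpointError (u g : ℝ → ℝ) (m : ℕ) : ℝ :=
  (u 1 - u 0) - (1 / m) * ∑ i ∈ range m, g (midpointNode m i)

noncomputable def rightDefect (u g : ℝ → ℝ) (m i : ℕ) : ℝ :=
  bregman u g (midpointNode m i) (midpointNode m i + 1 / (2 * m))

noncomputable def leftDefect (u g : ℝ → ℝ) (m i : ℕ) : ℝ :=
  bregman u g (midpointNode m i) (midpointNode m i - 1 / (2 * m))

theorem midpointNode_eq_mul {m : ℕ} (hm : 0 < m) (i : ℕ) :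
    midpointNode m i = (2 * i + 1) * (1 / (2 * m)) := by
  unfold midpointNode; field_simp

theorem midpointNode_add_half {m : ℕ} (hm : 0 < m) (i : ℕ) :
    midpointNode m i + 1 / (2 * m) = ((i + 1 : ℕ) : ℝ) / m := by
  unfold midpointNode; field_simp; push_cast; ring

theorem midpointNode_sub_half {m : ℕ} (hm : 0 < m) (i : ℕ) :
    midpointNode m i - 1 / (2 * m) = (i : ℝ) / m := by
  unfold midpointNode; field_simp; ring

theorem natCast_div_mem_Icc {i m : ℕ} (hi : i ≤ m) : (i : ℝ) / m ∈ Icc (0 : ℝ) 1 :=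
  ⟨by positivity, div_le_one_of_le₀ (by exact_mod_cast hi) (by positivity)⟩

theorem midpointNode_add_half_mem {m i : ℕ} (hi : i < m) :
    midpointNode m i + 1 / (2 * m) ∈ Icc (0 : ℝ) 1 := by
  rw [midpointNode_add_half (by omega)]; exact natCast_div_mem_Icc hi

theorem midpointNode_sub_half_mem {m i : ℕ} (hi : i < m) :
    midpointNode m i - 1 / (2 * m) ∈ Icc (0 : ℝ) 1 := by
  rw [midpointNode_sub_half (by omega)]; exact natCast_div_mem_Icc hi.le

theorem midpointNode_mem {m i : ℕ} (hi : i < m) : midpointNode m i ∈ Icc (0 : ℝ) 1 := by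
  have : (0 : ℝ) ≤ 1 / (2 * m) := by positivity
  exact ⟨by linarith [(midpointNode_sub_half_mem hi).1],
    by linarith [(midpointNode_add_half_mem hi).2]⟩

theorem midpointError_eq_sum_rightDefect_sub {m : ℕ} (hm : 0 < m) :
    midpointError u g m
      = ∑ i ∈ range m, rightDefect u g m i - ∑ i ∈ range m, leftDefect u g m i := by
  have hcell : ∀ i : ℕ, rightDefect u g m i - leftDefect u g m i
      = (u (((i + 1 : ℕ) : ℝ) / m) - u ((i : ℝ) / m)) - 1 / m * g (midpointNode m i) := by
    intro i
    rw [rightDefect, leftDefect, bregman, bregman, midpointNode_add_half hm,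
      midpointNode_sub_half hm, midpointNode]
    field_simp
    push_cast
    ring
  rw [← sum_sub_distrib, sum_congr rfl fun i _ => hcell i, sum_sub_distrib,
    sum_range_sub (fun i : ℕ => u ((i : ℝ) / m)), ← mul_sum, midpointError]
  simp [hm.ne']

theorem midpointError_comp_one_sub (u g : ℝ → ℝ) {m : ℕ} (hm : 0 < m) :
    midpointError (fun x => u (1 - x)) (fun x => -g (1 - x)) m = -midpointError u g m := by
  have hnode : ∀ i ∈ range m, g (1 - midpointNode m i) = g (midpointNode m (m - 1 - i)) := by
    intro i hi
    have hi : i + 1 ≤ m := mem_range.1 hi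
    rw [midpointNode, midpointNode, Nat.sub_sub, Nat.cast_sub (by omega)]
    field_simp
    push_cast
    ring_nf
  simp only [midpointError, sub_zero, sub_self, sum_neg_distrib, sum_congr rfl hnode,
    sum_range_reflect (fun i => g (midpointNode m i))]
  ring

theorem midpointError_eq_comp_min_add_comp_max {c : ℝ} (hc : c ∈ Icc (0 : ℝ) 1) (hgc : g c = 0)
    (m : ℕ) :
    midpointError u g m = midpointError (fun x => u (min x c)) (fun x => g (min x c)) m
      + midpointError (fun x => u (max x c)) (fun x => g (max x c)) m := by
  have hsum : ∀ t, g (min t c) + g (max t c) = g t := fun t => by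
    rcases le_total t c with h | h <;> simp [h, hgc]
  simp only [midpointError, min_eq_left hc.1, min_eq_right hc.2, max_eq_right hc.1,
    max_eq_left hc.2, ← sum_congr rfl fun i _ => hsum (midpointNode m i), sum_add_distrib]
  ring

namespace BregmanBounds

theorem rightDefect_bounds (hu : BregmanBounds M (Icc 0 1) u g) {m i : ℕ} (hi : i < m) :
    0 ≤ rightDefect u g m i ∧ rightDefect u g m i ≤ M / 2 * (1 / (2 * m)) ^ 2 := by
  simpa [rightDefect] using hu _ (midpointNode_mem hi) _ (midpointNode_add_half_mem hi)

theorem leftDefect_bounds (hu : BregmanBounds M (Icc 0 1) u g) {m i : ℕ} (hi : i < m) :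
    0 ≤ leftDefect u g m i ∧ leftDefect u g m i ≤ M / 2 * (1 / (2 * m)) ^ 2 := by
  simpa [leftDefect] using hu _ (midpointNode_mem hi) _ (midpointNode_sub_half_mem hi)

theorem sum_odd_mul_defect_le (hu : BregmanBounds M (Icc 0 1) u g) (hg : g 1 ≤ 0) {m : ℕ}
    (hm : 0 < m) :
    ∑ i ∈ range m, (2 * i + 1) * rightDefect u g m i
      + ∑ i ∈ range m, (2 * i + 1) * leftDefect u g m i ≤ u 0 - u 1 := by
  have hcell : ∀ i < m, (2 * i + 1) * rightDefect u g m i + (2 * i + 1) * leftDefect u g m i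
      ≤ tangentIntercept u g ((i : ℝ) / m) - tangentIntercept u g (((i + 1 : ℕ) : ℝ) / m) := by
    intro i hi
    have hh : (0 : ℝ) < 1 / (2 * m) := by positivity
    have key := mul_bregman_add_bregman_le hh.le
      (by linarith [(midpointNode_sub_half_mem hi).1])
      (hu _ (midpointNode_add_half_mem hi) _ (midpointNode_mem hi)).1
      (hu _ (midpointNode_sub_half_mem hi) _ (midpointNode_mem hi)).1
    rw [← midpointNode_add_half hm, ← midpointNode_sub_half hm]
    refine le_of_mul_le_mul_left ?_ hh
    calc 1 / (2 * m) * ((2 * i + 1) * rightDefect u g m i + (2 * i + 1) * leftDefect u g m i)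
        = midpointNode m i * (rightDefect u g m i + leftDefect u g m i) := by
          rw [midpointNode_eq_mul hm]; ring
      _ ≤ _ := key
  have := sum_le_sum fun i hi => hcell i (mem_range.1 hi)
  rw [sum_add_distrib, sum_range_sub' (fun i : ℕ => tangentIntercept u g ((i : ℝ) / m))] at this
  simp only [tangentIntercept, CharP.cast_eq_zero, zero_div, zero_mul, sub_zero,
    div_self (Nat.cast_ne_zero.2 hm.ne' : (m : ℝ) ≠ 0), one_mul] at this
  linarith

theorem abs_midpointError_le_of_nonpos (hu : BregmanBounds M (Icc 0 1) u g) (hg : g 1 ≤ 0)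
    {m : ℕ} (hm : 0 < m) :
    |midpointError u g m| ≤ 1 / (4 * m) * √(2 * M * (u 0 - u 1)) := by
  have hR := fun i (hi : i < m) => hu.rightDefect_bounds hi
  have hL := fun i (hi : i < m) => hu.leftDefect_bounds hi
  have hK : 0 ≤ M / 2 * (1 / (2 * m)) ^ 2 := (hR 0 hm).1.trans (hR 0 hm).2
  have hweight : ∀ {α : ℕ → ℝ}, (∀ i < m, 0 ≤ α i) → 0 ≤ ∑ i ∈ range m, (2 * i + 1) * α i :=
    fun hα => sum_nonneg fun i hi => mul_nonneg (by positivity) (hα i (mem_range.1 hi))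
  have hsum := hu.sum_odd_mul_defect_le hg hm
  have hsqrt : √(M / 2 * (1 / (2 * m)) ^ 2 * (u 0 - u 1))
      = 1 / (4 * m) * √(2 * M * (u 0 - u 1)) := by
    rw [show M / 2 * (1 / (2 * m)) ^ 2 * (u 0 - u 1) = (1 / (4 * m)) ^ 2 * (2 * M * (u 0 - u 1)) by
      field_simp; ring, Real.sqrt_mul (sq_nonneg _), Real.sqrt_sq (by positivity)]
  rw [midpointError_eq_sum_rightDefect_sub hm, ← hsqrt]
  exact abs_sub_le_of_nonneg_of_le (sum_nonneg fun i hi => (hR i (mem_range.1 hi)).1)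
    (sum_le_sqrt_of_sum_odd_mul_le hK (fun i hi => (hR i hi).1) (fun i hi => (hR i hi).2)
      (by linarith [hweight fun i hi => (hL i hi).1]))
    (sum_nonneg fun i hi => (hL i (mem_range.1 hi)).1)
    (sum_le_sqrt_of_sum_odd_mul_le hK (fun i hi => (hL i hi).1) (fun i hi => (hL i hi).2)
      (by linarith [hweight fun i hi => (hR i hi).1]))

theorem abs_midpointError_le_of_nonneg (hu : BregmanBounds M (Icc 0 1) u g) (hg : 0 ≤ g 0)
    {m : ℕ} (hm : 0 < m) :
    |midpointError u g m| ≤ 1 / (4 * m) * √(2 * M * (u 1 - u 0)) := by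
  have hv := hu.comp_sub_left 1
  rw [preimage_const_sub_Icc, sub_zero, sub_self] at hv
  have := hv.abs_midpointError_le_of_nonpos (by simpa using hg) hm
  rwa [midpointError_comp_one_sub u g hm, abs_neg, sub_zero, sub_self] at this

theorem abs_midpointError_le (hu : BregmanBounds M (Icc 0 1) u g) {m : ℕ} (hm : 0 < m)
    {ustar : ℝ} (hmin : ∀ t ∈ Icc (0 : ℝ) 1, ustar ≤ u t) :
    |midpointError u g m|
      ≤ 1 / (4 * m) * (√(2 * M * (u 1 - ustar)) + √(2 * M * (u 0 - ustar))) := by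
  have h₀ : (0 : ℝ) ∈ Icc (0 : ℝ) 1 := left_mem_Icc.2 zero_le_one
  have h₁ : (1 : ℝ) ∈ Icc (0 : ℝ) 1 := right_mem_Icc.2 zero_le_one
  have hM : 0 ≤ M := by linarith [(hu 0 h₀ 1 h₁).1.trans (hu 0 h₀ 1 h₁).2]
  have hβ : ∀ {a b : ℝ}, a ≤ b → 1 / (4 * m) * √(2 * M * a) ≤ 1 / (4 * m) * √(2 * M * b) :=
    fun hab => by gcongr
  have hβ₀ : ∀ a : ℝ, 0 ≤ 1 / (4 * m) * √(2 * M * a) := fun a => by positivity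
  rw [mul_add]
  rcases le_or_gt (g 1) 0 with hg₁ | hg₁
  · linarith [hu.abs_midpointError_le_of_nonpos hg₁ hm,
      hβ (by linarith [hmin 1 h₁] : u 0 - u 1 ≤ u 0 - ustar), hβ₀ (u 1 - ustar)]
  rcases le_or_gt 0 (g 0) with hg₀ | hg₀
  · linarith [hu.abs_midpointError_le_of_nonneg hg₀ hm,
      hβ (by linarith [hmin 0 h₀] : u 1 - u 0 ≤ u 1 - ustar), hβ₀ (u 0 - ustar)]
  obtain ⟨c, hc, hgc⟩ := intermediate_value_Icc zero_le_one hu.lipschitzOnWith.continuousOn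
    (⟨hg₀.le, hg₁.le⟩ : (0 : ℝ) ∈ Icc (g 0) (g 1))
  have hleft := (hu.comp_min hc hgc).abs_midpointError_le_of_nonpos
    (by simpa [min_eq_right hc.2] using hgc.le) hm
  have hright := (hu.comp_max hc hgc).abs_midpointError_le_of_nonneg
    (by simpa [max_eq_right hc.1] using hgc.ge) hm
  simp only [min_eq_left hc.1, min_eq_right hc.2, max_eq_right hc.1, max_eq_left hc.2]
    at hleft hright
  rw [midpointError_eq_comp_min_add_comp_max hc hgc]
  linarith [abs_add_le (midpointError (fun x => u (min x c)) (fun x => g (min x c)) m)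
    (midpointError (fun x => u (max x c)) (fun x => g (max x c)) m),
    hβ (by linarith [hmin c hc] : u 0 - u c ≤ u 0 - ustar),
    hβ (by linarith [hmin c hc] : u 1 - u c ≤ u 1 - ustar)]

end BregmanBounds

end MidpointRule

theorem stmt18_general (u u' : ℝ → ℝ) (M ustar : ℝ) (m : ℕ) (hm : 0 < m)
    (hconv : ConvexOn ℝ (Set.Icc 0 1) u)
    (hderiv : ∀ t ∈ Set.Icc (0 : ℝ) 1, HasDerivWithinAt u (u' t) (Set.Icc 0 1) t)
    (hLip : ∀ t ∈ Set.Icc (0 : ℝ) 1, ∀ t' ∈ Set.Icc (0 : ℝ) 1,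
      |u' t - u' t'| ≤ M * |t - t'|)
    (hmin : ∀ t ∈ Set.Icc (0 : ℝ) 1, ustar ≤ u t) :
    |(u 1 - u 0) - (1 / m) * ∑ i ∈ Finset.range m, u' ((2 * (i : ℝ) + 1) / (2 * m))|
      ≤ 1 / (4 * m) *
        (Real.sqrt (2 * M * (u 1 - ustar)) + Real.sqrt (2 * M * (u 0 - ustar))) :=
  (MidpointRule.bregmanBounds_of_convexOn hconv hderiv hLip).abs_midpointError_le hm hmin

/-- Midpoint-rule error bound for convex smooth functions: if `u` is convex and
differentiable on `[0,1]` with `M`-Lipschitz derivative, `u_*` its minimum over `[0,1]`,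
and `t_i = (2i-1)/(2m)`, then
`|(u 1 - u 0) - (1/m) Σᵢ u'(tᵢ)| ≤ (1/(4m)) (√(2M(u 1 - u_*)) + √(2M(u 0 - u_*)))`. -/
theorem stmt18 (u u' : ℝ → ℝ) (M ustar : ℝ) (m : ℕ) (hm : 0 < m)
    (hconv : ConvexOn ℝ (Set.Icc 0 1) u)
    (hderiv : ∀ t ∈ Set.Icc (0 : ℝ) 1, HasDerivWithinAt u (u' t) (Set.Icc 0 1) t)
    (hLip : ∀ t ∈ Set.Icc (0 : ℝ) 1, ∀ t' ∈ Set.Icc (0 : ℝ) 1,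
      |u' t - u' t'| ≤ M * |t - t'|)
    (hmin : ∀ t ∈ Set.Icc (0 : ℝ) 1, ustar ≤ u t)
    (hattain : ∃ t ∈ Set.Icc (0 : ℝ) 1, u t = ustar) :
    |(u 1 - u 0) - (1 / m) * ∑ i ∈ Finset.range m, u' ((2 * (i : ℝ) + 1) / (2 * m))|
      ≤ 1 / (4 * m) *
        (Real.sqrt (2 * M * (u 1 - ustar)) + Real.sqrt (2 * M * (u 0 - ustar))) :=
  stmt18_general u u' M ustar m hm hconv hderiv hLip hmin
end
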